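/- In the setting of the vertical smoothing of a C⁰-Finsler structure, the vertical radial derivative of ζ_ε ∗_v F is strictly positive on the annulus 𝒜 = {(x,y) : x ∈ U, 1/2 ≤ ‖y‖ ≤ 2r_U/r_u}: namely yⁱ ∂(ζ_ε ∗_v F)/∂yⁱ (x,y) ≥ (7/128) r_u ‖y‖ > 0 for all (x,y) ∈ 𝒜 and all sufficiently small ε. -/

import Mathlib

open MeasureTheory
open scoped Convolution

/-- The standard mollifier on ℝⁿ. -/
noncomputable def eta {n : ℕ} (C : ℝ) (x : EuclideanSpace ℝ (Fin n)) : ℝ :=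
  if ‖x‖ < 1 then C * Real.exp (1 / (‖x‖ ^ 2 - 1)) else 0

/-- The rescaled mollifier `η_ε(x) = ε^{-n} η(x/ε)`. -/
noncomputable def etaE {n : ℕ} (C ε : ℝ) (x : EuclideanSpace ℝ (Fin n)) : ℝ :=
  (1 / ε ^ n) * eta C (ε⁻¹ • x)

/-!
Positive homogeneity and subadditivity make each `F x` convex along rays, so
`t ↦ F x (y + t • y - z)` grows at least at the rate `F x (y - z) - F x (-z) ≥ r_u ‖y‖ - 2 r_U ‖z‖`.
On the support of the narrow kernel `η_ε` this rate is close to `r_u ‖y‖`; on that of the wide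
kernel `η_{2r_U/r_u}` subadditivity still bounds the loss rate by `r_U ‖y‖`, which the weight
`u(ε)` makes small. Both kernels are probability densities, so `ζ_ε ∗_v F x` grows along the ray
at rate at least `(1 - u)(r_u ‖y‖ - 2 r_U ε) - u r_U ‖y‖ ≥ (7/128) r_u ‖y‖`, and this bounds its
radial derivative, which exists because `ζ_ε` is smooth with compact support.
-/

structure IsSublinear {E : Type*} [AddCommGroup E] [Module ℝ E] (f : E → ℝ) : Prop where
  map_nonneg_smul : ∀ (μ : ℝ) (y : E), 0 ≤ μ → f (μ • y) = μ * f y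
  map_add_le : ∀ y z, f (y + z) ≤ f y + f z

namespace IsSublinear

section Module

variable {E : Type*} [AddCommGroup E] [Module ℝ E] {f : E → ℝ}

theorem map_zero (hf : IsSublinear f) : f 0 = 0 := by
  simpa using hf.map_nonneg_smul 0 0 le_rfl

theorem sub_le_map_add (hf : IsSublinear f) (a b : E) : f a - f (-b) ≤ f (a + b) := by
  have := hf.map_add_le (a + b) (-b)
  rw [add_neg_cancel_right] at this
  linarith

theorem mul_sub_le_sub (hf : IsSublinear f) (a b : E) {t : ℝ} (ht : 0 ≤ t) :
    t * (f a - f (a - b)) ≤ f (a + t • b) - f a := by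
  have hdecomp : (1 + t) • a = (a + t • b) + t • (a - b) := by
    rw [smul_sub, add_smul, one_smul]; abel
  have := hf.map_add_le (a + t • b) (t • (a - b))
  rw [← hdecomp, hf.map_nonneg_smul _ _ (by linarith), hf.map_nonneg_smul _ _ ht] at this
  linarith

end Module

section Normed

variable {E : Type*} [NormedAddCommGroup E] [NormedSpace ℝ E] {f : E → ℝ}

theorem map_eq_norm_mul (hf : IsSublinear f) {v : E} (hv : v ≠ 0) :
    f v = ‖v‖ * f (‖v‖⁻¹ • v) := by
  rw [← hf.map_nonneg_smul _ _ (norm_nonneg v), smul_smul,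
    mul_inv_cancel₀ (norm_ne_zero_iff.mpr hv), one_smul]

theorem map_le_mul_norm (hf : IsSublinear f) {M : ℝ} (hM : ∀ v : E, ‖v‖ = 1 → f v ≤ M) (v : E) :
    f v ≤ M * ‖v‖ := by
  rcases eq_or_ne v 0 with rfl | hv
  · simp [hf.map_zero]
  · rw [hf.map_eq_norm_mul hv, mul_comm M]
    exact mul_le_mul_of_nonneg_left (hM _ (norm_smul_inv_norm hv)) (norm_nonneg v)

theorem mul_norm_le_map (hf : IsSublinear f) {m : ℝ} (hm : ∀ v : E, ‖v‖ = 1 → m ≤ f v) (v : E) :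
    m * ‖v‖ ≤ f v := by
  rcases eq_or_ne v 0 with rfl | hv
  · simp [hf.map_zero]
  · rw [hf.map_eq_norm_mul hv, mul_comm m]
    exact mul_le_mul_of_nonneg_left (hm _ (norm_smul_inv_norm hv)) (norm_nonneg v)

theorem mul_sub_le_map_radial_sub (hf : IsSublinear f) {m M : ℝ}
    (hm : ∀ v, m * ‖v‖ ≤ f v) (hM : ∀ v, f v ≤ M * ‖v‖) (y z : E) {t : ℝ} (ht : 0 ≤ t) :
    t * (m * ‖y‖ - 2 * M * ‖z‖) ≤ f (y + t • y - z) - f (y - z) := by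
  have hray := hf.mul_sub_le_sub (y - z) y ht
  rw [sub_sub_cancel_left, sub_add_eq_add_sub] at hray
  have hsplit := hf.sub_le_map_add y (-z)
  rw [neg_neg, ← sub_eq_add_neg] at hsplit
  have := hM (-z)
  rw [norm_neg] at this
  nlinarith [hm y, hM z]

theorem neg_mul_le_map_radial_sub (hf : IsSublinear f) {M : ℝ} (hM : ∀ v, f v ≤ M * ‖v‖)
    (y z : E) {t : ℝ} (ht : 0 ≤ t) :
    -(t * (M * ‖y‖)) ≤ f (y + t • y - z) - f (y - z) := by
  have hsplit := hf.sub_le_map_add (y - z) (t • y)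
  rw [sub_add_eq_add_sub, ← smul_neg, hf.map_nonneg_smul _ _ ht] at hsplit
  have := hM (-y)
  rw [norm_neg] at this
  nlinarith

end Normed

end IsSublinear

section Kernel

variable {G : Type*} [MeasurableSpace G] {μ : Measure G}

theorem le_integral_mul_of_forall_ne_zero {φ g : G → ℝ} {c : ℝ} (hφ : ∀ z, 0 ≤ φ z)
    (hφ1 : ∫ z, φ z ∂μ = 1) (hg : Integrable (fun z => φ z * g z) μ)
    (h : ∀ z, φ z ≠ 0 → c ≤ g z) : c ≤ ∫ z, φ z * g z ∂μ := by
  have hφi : Integrable φ μ := .of_integral_ne_zero (by simp [hφ1])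
  calc c = ∫ z, φ z * c ∂μ := by rw [integral_mul_const, hφ1, one_mul]
    _ ≤ ∫ z, φ z * g z ∂μ := integral_mono (hφi.mul_const c) hg fun z => by
        rcases eq_or_ne (φ z) 0 with h0 | h0
        · simp [h0]
        · exact mul_le_mul_of_nonneg_left (h z h0) (hφ z)

theorem le_convolution_sub_convolution [AddGroup G] {φ f : G → ℝ} {c : ℝ} {w w' : G}
    (hφ : ∀ z, 0 ≤ φ z) (hφ1 : ∫ z, φ z ∂μ = 1)
    (hw : ConvolutionExistsAt φ f w (ContinuousLinearMap.lsmul ℝ ℝ) μ)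
    (hw' : ConvolutionExistsAt φ f w' (ContinuousLinearMap.lsmul ℝ ℝ) μ)
    (h : ∀ z, φ z ≠ 0 → c ≤ f (w' - z) - f (w - z)) :
    c ≤ (φ ⋆[ContinuousLinearMap.lsmul ℝ ℝ, μ] f) w' -
      (φ ⋆[ContinuousLinearMap.lsmul ℝ ℝ, μ] f) w := by
  have hi : Integrable (fun z => φ z * f (w - z)) μ := hw.integrable
  have hi' : Integrable (fun z => φ z * f (w' - z)) μ := hw'.integrable
  simp only [convolution_lsmul, smul_eq_mul]
  rw [← integral_sub hi' hi]
  simp_rw [← mul_sub]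
  exact le_integral_mul_of_forall_ne_zero hφ hφ1 (by simpa only [mul_sub] using hi'.sub' hi) h

end Kernel

theorem le_fderiv_apply_of_forall_mul_le_sub {E : Type*} [NormedAddCommGroup E]
    [NormedSpace ℝ E] {f : E → ℝ} {y v : E} {c : ℝ} (hf : DifferentiableAt ℝ f y)
    (h : ∀ t > 0, t * c ≤ f (y + t • v) - f y) : c ≤ fderiv ℝ f y v :=
  ge_of_tendsto (hf.hasFDerivAt.hasLineDerivAt v).tendsto_slope_zero_right <|
    eventually_nhdsWithin_of_forall fun t ht => by
      rw [smul_eq_mul, le_inv_mul_iff₀ ht]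
      exact h t ht

theorem sixteen_mul_mul_lt_of_lt_div {m M δ : ℝ} {n : ℕ} (hm : 0 ≤ m) (hδ : 0 < δ)
    (h : δ < m / (16 * n * M)) : 16 * M * δ < m := by
  have hden : 0 < 16 * n * M := by
    by_contra! hden
    linarith [div_nonpos_of_nonneg_of_nonpos hm hden]
  have hn : (1 : ℝ) ≤ n := by
    rcases Nat.eq_zero_or_pos n with rfl | hn
    · simp at hden
    · exact_mod_cast hn
  have hM : 0 < M := pos_of_mul_pos_right hden (by positivity)
  rw [lt_div_iff₀ hden] at h
  nlinarith

section Mollifier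

variable {n : ℕ} {C δ : ℝ}

theorem eta_eq_mul_expNegInvGlue (C : ℝ) (x : EuclideanSpace ℝ (Fin n)) :
    eta C x = C * expNegInvGlue (1 - ‖x‖ ^ 2) := by
  rw [eta, expNegInvGlue]
  split_ifs with h h' h'
  · nlinarith [norm_nonneg x]
  · rw [one_div, neg_inv, neg_sub]
  · simp
  · nlinarith [norm_nonneg x]

theorem contDiff_eta (C : ℝ) : ContDiff ℝ (⊤ : ℕ∞) (eta (n := n) C) := by
  simp_rw [funext (eta_eq_mul_expNegInvGlue C)]
  exact contDiff_const.mul (expNegInvGlue.contDiff.comp (contDiff_const.sub (contDiff_norm_sq ℝ)))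

theorem contDiff_etaE (C δ : ℝ) : ContDiff ℝ (⊤ : ℕ∞) (etaE (n := n) C δ) :=
  contDiff_const.mul ((contDiff_eta C).comp (contDiff_const_smul δ⁻¹))

theorem etaE_nonneg (hC : 0 ≤ C) (hδ : 0 ≤ δ) (x : EuclideanSpace ℝ (Fin n)) :
    0 ≤ etaE C δ x := by
  rw [etaE, eta_eq_mul_expNegInvGlue]
  exact mul_nonneg (by positivity) (mul_nonneg hC (expNegInvGlue.nonneg _))

theorem etaE_eq_zero_of_le_norm (hδ : 0 < δ) {x : EuclideanSpace ℝ (Fin n)} (hx : δ ≤ ‖x‖) :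
    etaE C δ x = 0 := by
  rw [etaE, eta, if_neg, mul_zero]
  rwa [norm_smul, norm_inv, Real.norm_of_nonneg hδ.le, not_lt, le_inv_mul_iff₀ hδ, mul_one]

theorem norm_lt_of_etaE_ne_zero (hδ : 0 < δ) {x : EuclideanSpace ℝ (Fin n)}
    (hx : etaE C δ x ≠ 0) : ‖x‖ < δ :=
  lt_of_not_ge fun h => hx (etaE_eq_zero_of_le_norm hδ h)

theorem hasCompactSupport_etaE (hδ : 0 < δ) : HasCompactSupport (etaE (n := n) C δ) :=
  .intro (isCompact_closedBall 0 δ) fun x hx =>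
    etaE_eq_zero_of_le_norm hδ (le_of_lt (by simpa using hx))

theorem integral_etaE (hδ : 0 < δ) (hnorm : ∫ x : EuclideanSpace ℝ (Fin n), eta C x = 1) :
    ∫ x : EuclideanSpace ℝ (Fin n), etaE C δ x = 1 := by
  have hscale := Measure.integral_comp_inv_smul (volume : Measure (EuclideanSpace ℝ (Fin n)))
    (eta C) δ
  rw [hnorm, finrank_euclideanSpace_fin, abs_of_pos (pow_pos hδ n), smul_eq_mul,
    mul_one] at hscale
  simp only [etaE]
  rw [integral_const_mul, hscale, one_div, inv_mul_cancel₀ (by positivity)]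

theorem convolutionExists_etaE (hδ : 0 < δ) {f : EuclideanSpace ℝ (Fin n) → ℝ}
    (hf : LocallyIntegrable f) :
    ConvolutionExists (etaE C δ) f (ContinuousLinearMap.lsmul ℝ ℝ) volume :=
  (hasCompactSupport_etaE hδ).convolutionExists_left _ (contDiff_etaE C δ).continuous hf

theorem contDiff_etaE_convolution (hδ : 0 < δ) {f : EuclideanSpace ℝ (Fin n) → ℝ}
    (hf : LocallyIntegrable f) : ContDiff ℝ (⊤ : ℕ∞) (etaE C δ ⋆ f) :=
  (hasCompactSupport_etaE hδ).contDiff_convolution_left _ (contDiff_etaE C δ) hf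

end Mollifier

/-- The kernel `ζ_ε` of the paper, with `δ = ε`, `R = 2 r_U / r_u` and `u = u(ε)`. -/
noncomputable def mixedMollifier {n : ℕ} (C δ R u : ℝ) (z : EuclideanSpace ℝ (Fin n)) : ℝ :=
  (1 - u) * etaE C δ z + u * etaE C R z

section Growth

variable {n : ℕ} {C δ R u : ℝ} {f : EuclideanSpace ℝ (Fin n) → ℝ}

theorem mixedMollifier_convolution_apply (hδ : 0 < δ) (hR : 0 < R) (hf : LocallyIntegrable f)
    (w : EuclideanSpace ℝ (Fin n)) :
    (mixedMollifier C δ R u ⋆ f) w = (1 - u) * (etaE C δ ⋆ f) w + u * (etaE C R ⋆ f) w := by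
  have hδw : Integrable (fun z => etaE C δ z * f (w - z)) :=
    (convolutionExists_etaE hδ hf w).integrable
  have hRw : Integrable (fun z => etaE C R z * f (w - z)) :=
    (convolutionExists_etaE hR hf w).integrable
  simp only [convolution_lsmul, smul_eq_mul, mixedMollifier, add_mul, mul_assoc]
  rw [integral_add (hδw.const_mul _) (hRw.const_mul _), integral_const_mul, integral_const_mul]

theorem differentiable_mixedMollifier_convolution (hδ : 0 < δ) (hR : 0 < R)
    (hf : LocallyIntegrable f) : Differentiable ℝ (mixedMollifier C δ R u ⋆ f) := by
  rw [funext (mixedMollifier_convolution_apply hδ hR hf)]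
  exact (((contDiff_etaE_convolution hδ hf).differentiable (by simp)).const_mul _).add
    (((contDiff_etaE_convolution hR hf).differentiable (by simp)).const_mul _)

namespace IsSublinear

variable {m M : ℝ}

theorem mul_sub_le_etaE_convolution_radial_sub (hf : IsSublinear f) (hfi : LocallyIntegrable f)
    (hC : 0 ≤ C) (hnorm : ∫ x : EuclideanSpace ℝ (Fin n), eta C x = 1) (hm : ∀ v, m * ‖v‖ ≤ f v)
    (hM : ∀ v, f v ≤ M * ‖v‖) (hM0 : 0 ≤ M) (hδ : 0 < δ) (y : EuclideanSpace ℝ (Fin n))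
    {t : ℝ} (ht : 0 ≤ t) :
    t * (m * ‖y‖ - 2 * M * δ) ≤ (etaE C δ ⋆ f) (y + t • y) - (etaE C δ ⋆ f) y := by
  refine le_convolution_sub_convolution (etaE_nonneg hC hδ.le) (integral_etaE hδ hnorm)
    (convolutionExists_etaE hδ hfi _) (convolutionExists_etaE hδ hfi _) fun z hz => ?_
  have hz := norm_lt_of_etaE_ne_zero hδ hz
  refine le_trans ?_ (hf.mul_sub_le_map_radial_sub hm hM y z ht)
  gcongr

theorem neg_mul_le_etaE_convolution_radial_sub (hf : IsSublinear f) (hfi : LocallyIntegrable f)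
    (hC : 0 ≤ C) (hnorm : ∫ x : EuclideanSpace ℝ (Fin n), eta C x = 1) (hM : ∀ v, f v ≤ M * ‖v‖)
    (hR : 0 < R) (y : EuclideanSpace ℝ (Fin n)) {t : ℝ} (ht : 0 ≤ t) :
    -(t * (M * ‖y‖)) ≤ (etaE C R ⋆ f) (y + t • y) - (etaE C R ⋆ f) y :=
  le_convolution_sub_convolution (etaE_nonneg hC hR.le) (integral_etaE hR hnorm)
    (convolutionExists_etaE hR hfi _) (convolutionExists_etaE hR hfi _)
    fun z _ => hf.neg_mul_le_map_radial_sub hM y z ht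

theorem mul_le_mixedMollifier_convolution_radial_sub (hf : IsSublinear f)
    (hfi : LocallyIntegrable f) (hC : 0 ≤ C) (hnorm : ∫ x : EuclideanSpace ℝ (Fin n), eta C x = 1)
    (hm : ∀ v, m * ‖v‖ ≤ f v) (hM : ∀ v, f v ≤ M * ‖v‖) (hm0 : 0 < m) (hmM : m ≤ M)
    (hδ : 0 < δ) (hR : 0 < R) (hδm : 16 * M * δ < m) (hu0 : 0 ≤ u) (hum : 16 * M * u < m)
    {y : EuclideanSpace ℝ (Fin n)} (hy : 1 / 2 ≤ ‖y‖) {t : ℝ} (ht : 0 ≤ t) :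
    t * (7 / 128 * m * ‖y‖) ≤
      (mixedMollifier C δ R u ⋆ f) (y + t • y) - (mixedMollifier C δ R u ⋆ f) y := by
  have hnear := hf.mul_sub_le_etaE_convolution_radial_sub hfi hC hnorm hm hM (by linarith) hδ y ht
  have hfar := hf.neg_mul_le_etaE_convolution_radial_sub hfi hC hnorm hM hR y ht
  have hu1 : 15 / 16 ≤ 1 - u := by nlinarith
  have hnear_rate : 3 / 4 * (m * ‖y‖) ≤ m * ‖y‖ - 2 * M * δ := by nlinarith
  have hfar_rate : u * (M * ‖y‖) ≤ 1 / 16 * (m * ‖y‖) := by nlinarith [norm_nonneg y]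
  have hrate : 7 / 128 * m * ‖y‖ ≤ (1 - u) * (m * ‖y‖ - 2 * M * δ) - u * (M * ‖y‖) := by
    nlinarith [mul_le_mul hu1 hnear_rate (by positivity) (by linarith)]
  rw [mixedMollifier_convolution_apply hδ hR hfi, mixedMollifier_convolution_apply hδ hR hfi]
  nlinarith [mul_le_mul_of_nonneg_left hnear (by linarith : 0 ≤ 1 - u),
    mul_le_mul_of_nonneg_left hfar hu0, mul_le_mul_of_nonneg_left hrate ht]

end IsSublinear

end Growth

theorem vertical_convolution_radial_derivative_pos_general {n : ℕ} (C : ℝ) (hC : 0 < C)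
    (hnorm : (∫ x : EuclideanSpace ℝ (Fin n), eta C x) = 1)
    (U : Set (EuclideanSpace ℝ (Fin n)))
    (F : EuclideanSpace ℝ (Fin n) → EuclideanSpace ℝ (Fin n) → ℝ)
    (hFc : Continuous fun p : EuclideanSpace ℝ (Fin n) × EuclideanSpace ℝ (Fin n) =>
      F p.1 p.2)
    (hnn : ∀ x ∈ closure U, ∀ y, 0 ≤ F x y)
    (hhom : ∀ x ∈ closure U, ∀ (μ : ℝ) y, 0 ≤ μ → F x (μ • y) = μ * F x y)
    (hsub : ∀ x ∈ closure U, ∀ y z, F x (y + z) ≤ F x y + F x z)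
    (rU ru : ℝ)
    (hrU : IsGreatest {c | ∃ x ∈ closure U, ∃ y : EuclideanSpace ℝ (Fin n),
      ‖y‖ = 1 ∧ F x y = c} rU)
    (hru : IsLeast {c | ∃ x ∈ closure U, ∃ y : EuclideanSpace ℝ (Fin n),
      ‖y‖ = 1 ∧ F x y = c} ru)
    (u : ℝ → ℝ) (ε : ℝ)
    (hε : 0 < ε) (hε' : ε < ru / (16 * n * rU))
    (hu : 0 < u ε) (hu' : u ε < ru / (16 * n * rU)) :
    ∀ x ∈ U, ∀ y : EuclideanSpace ℝ (Fin n),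
      1 / 2 ≤ ‖y‖ → ‖y‖ ≤ 2 * rU / ru →
      7 / 128 * ru * ‖y‖ ≤
        fderiv ℝ (fun w => ∫ z,
          ((1 - u ε) * etaE C ε z + u ε * etaE C (2 * rU / ru) z) * F x (w - z)) y y ∧
      0 < fderiv ℝ (fun w => ∫ z,
          ((1 - u ε) * etaE C ε z + u ε * etaE C (2 * rU / ru) z) * F x (w - z)) y y := by
  intro x hx y hy _
  have hxU : x ∈ closure U := subset_closure hx
  have hf : IsSublinear (F x) := ⟨hhom x hxU, hsub x hxU⟩
  have hfi : LocallyIntegrable (F x) := (hFc.comp (.prodMk_right x)).locallyIntegrable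
  have hM := hf.map_le_mul_norm fun v hv => hrU.2 ⟨x, hxU, v, hv, rfl⟩
  have hm := hf.mul_norm_le_map fun v hv => hru.2 ⟨x, hxU, v, hv, rfl⟩
  have hru0 : 0 ≤ ru := by
    obtain ⟨x', hx', y', -, rfl⟩ := hru.1
    exact hnn x' hx' y'
  have hruU : ru ≤ rU := hru.2 hrU.1
  have hεs := sixteen_mul_mul_lt_of_lt_div hru0 hε hε'
  have hus := sixteen_mul_mul_lt_of_lt_div hru0 hu hu'
  have hru_pos : 0 < ru := by nlinarith
  have hR : 0 < 2 * rU / ru := div_pos (by linarith) hru_pos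
  change 7 / 128 * ru * ‖y‖ ≤ fderiv ℝ (mixedMollifier C ε (2 * rU / ru) (u ε) ⋆ F x) y y ∧ _
  have hderiv := le_fderiv_apply_of_forall_mul_le_sub
    ((differentiable_mixedMollifier_convolution hε hR hfi).differentiableAt)
    fun t ht => hf.mul_le_mixedMollifier_convolution_radial_sub hfi hC.le hnorm hm hM hru_pos
      hruU hε hR hεs hu.le hus hy ht.le
  exact ⟨hderiv, hderiv.trans_lt' (by positivity)⟩

/-- In the setting of the vertical smoothing of a C⁰-Finsler structure, the vertical
radial derivative of `ζ_ε ∗_v F` is strictly positive on the annulus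
`𝒜 = {(x,y) : x ∈ U, 1/2 ≤ ‖y‖ ≤ 2r_U/r_u}`:
`yⁱ ∂(ζ_ε ∗_v F)/∂yⁱ (x,y) ≥ (7/128) r_u ‖y‖ > 0` for all `(x,y) ∈ 𝒜` and all
sufficiently small `ε` (namely `ε, u(ε) < r_u/(16 n r_U)`). The contraction
`yⁱ ∂/∂yⁱ` is expressed as the Fréchet derivative in the fiber variable applied
to `y` itself. -/
theorem vertical_convolution_radial_derivative_pos {n : ℕ} (C : ℝ) (hC : 0 < C)
    (hnorm : (∫ x : EuclideanSpace ℝ (Fin n), eta C x) = 1)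
    (U : Set (EuclideanSpace ℝ (Fin n))) (hUo : IsOpen U)
    (hUc : IsCompact (closure U))
    (F : EuclideanSpace ℝ (Fin n) → EuclideanSpace ℝ (Fin n) → ℝ)
    (hFc : Continuous fun p : EuclideanSpace ℝ (Fin n) × EuclideanSpace ℝ (Fin n) =>
      F p.1 p.2)
    (hnn : ∀ x ∈ closure U, ∀ y, 0 ≤ F x y)
    (hzero : ∀ x ∈ closure U, ∀ y, F x y = 0 → y = 0)
    (hhom : ∀ x ∈ closure U, ∀ (μ : ℝ) y, 0 ≤ μ → F x (μ • y) = μ * F x y)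
    (hsub : ∀ x ∈ closure U, ∀ y z, F x (y + z) ≤ F x y + F x z)
    (rU ru : ℝ)
    (hrU : IsGreatest {c | ∃ x ∈ closure U, ∃ y : EuclideanSpace ℝ (Fin n),
      ‖y‖ = 1 ∧ F x y = c} rU)
    (hru : IsLeast {c | ∃ x ∈ closure U, ∃ y : EuclideanSpace ℝ (Fin n),
      ‖y‖ = 1 ∧ F x y = c} ru)
    (u : ℝ → ℝ) (ε : ℝ)
    (hε : 0 < ε) (hε' : ε < ru / (16 * n * rU))
    (hu : 0 < u ε) (hu' : u ε < ru / (16 * n * rU)) :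
    ∀ x ∈ U, ∀ y : EuclideanSpace ℝ (Fin n),
      1 / 2 ≤ ‖y‖ → ‖y‖ ≤ 2 * rU / ru →
      7 / 128 * ru * ‖y‖ ≤
        fderiv ℝ (fun w => ∫ z,
          ((1 - u ε) * etaE C ε z + u ε * etaE C (2 * rU / ru) z) * F x (w - z)) y y ∧
      0 < fderiv ℝ (fun w => ∫ z,
          ((1 - u ε) * etaE C ε z + u ε * etaE C (2 * rU / ru) z) * F x (w - z)) y y :=
  vertical_convolution_radial_derivative_pos_general C hC hnorm U F hFc hnn hhom hsub rU ru hrU hru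
    u ε hε hε' hu hu'
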